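/- arXiv:hep-th/9306139 — 5 statements merged into one kernel-verified Lean document; each statement's English description precedes it below -/
import Mathlib

section
/- Let n ≥ 1 and consider the polynomial ring ℝ[x_{ab} : 1 ≤ a ≤ b ≤ n]. For 1 ≤ i ≤ n let E_i be the derivation E_i = −∂/∂x_{ii} − Σ_{j=i+1}^{n} x_{i+1,j} ∂/∂x_{ij}. Then the iterated Lie bracket of derivations [⋯[[E_1, E_2], E_3], ⋯, E_n] equals the derivation −∂/∂x_{1n}. (For n = 1 the statement reads E_1 = −∂/∂x_{11}.) -/
open MvPolynomial

/-- Index set for the coordinates `x_{ab}`, `1 ≤ a ≤ b ≤ n`, of the big cell. -/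
abbrev TriIdx (n : ℕ) : Type := {p : ℕ × ℕ // 1 ≤ p.1 ∧ p.1 ≤ p.2 ∧ p.2 ≤ n}

/-- The raising generator `E_i = −∂/∂x_{ii} − Σ_{j=i+1}^{n} x_{i+1,j} ∂/∂x_{ij}` as a
derivation of the polynomial ring `ℝ[x_{ab} : 1 ≤ a ≤ b ≤ n]`. -/
noncomputable def Egen (n : ℕ) (i : ℕ) (h1 : 1 ≤ i) (h2 : i ≤ n) :
    Derivation ℝ (MvPolynomial (TriIdx n) ℝ) (MvPolynomial (TriIdx n) ℝ) :=
  - pderiv (⟨(i, i), h1, le_rfl, h2⟩ : TriIdx n)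
  - ∑ j ∈ (Finset.Icc (i + 1) n).attach,
      (X (⟨(i + 1, j.1), by have := Finset.mem_Icc.mp j.2; omega⟩ : TriIdx n) :
          MvPolynomial (TriIdx n) ℝ) •
        pderiv (⟨(i, j.1), by have := Finset.mem_Icc.mp j.2; omega⟩ : TriIdx n)

/-!
A derivation of a polynomial ring is determined by its values on the variables. Comparing these
values shows by induction on `k` that `[⋯[E_1, E_2], ⋯, E_k] = C_k`, where
`C_k = −∂/∂x_{1k} − Σ_{j>k} x_{k+1,j} ∂/∂x_{1j}`. Indeed `C_k` kills every `x_{ab}` with `a ≠ 1`,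
in particular every value `E_{k+1}(x_{ab})`, so `[C_k, E_{k+1}](x_{ab}) = −E_{k+1}(C_k x_{ab})`,
which is `C_{k+1}(x_{ab})`. For `k = n` the sum in `C_n` is empty.
-/

theorem Derivation.sum_apply {R A M ι : Type*} [CommSemiring R] [CommSemiring A] [AddCommMonoid M]
    [Algebra R A] [Module A M] [Module R M] (s : Finset ι) (D : ι → Derivation R A M) (a : A) :
    (∑ i ∈ s, D i) a = ∑ i ∈ s, D i a := by
  rw [← Derivation.coeFnAddMonoidHom_apply, map_sum, Finset.sum_apply]
  rfl

noncomputable def triX (n a b : ℕ) : MvPolynomial (TriIdx n) ℝ :=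
  if h : 1 ≤ a ∧ a ≤ b ∧ b ≤ n then X ⟨(a, b), h⟩ else 0

theorem Egen_X (n i : ℕ) (h1 : 1 ≤ i) (h2 : i ≤ n) (v : TriIdx n) :
    Egen n i h1 h2 (X v) =
      if v.1.1 = i then (if v.1.2 = i then -1 else -triX n (i + 1) v.1.2) else 0 := by
  classical
  obtain ⟨⟨a, b⟩, ha, hab, hb⟩ := v
  simp only [Egen, Derivation.sub_apply, Derivation.neg_apply, Derivation.sum_apply,
    Derivation.coe_smul, Pi.smul_apply, pderiv_X, Pi.single_apply, Subtype.ext_iff, Prod.ext_iff,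
    smul_eq_mul, mul_ite, mul_one, mul_zero]
  have hsum : ∑ j ∈ (Finset.Icc (i + 1) n).attach,
      (if a = i ∧ b = j.1 then (X ⟨(i + 1, j.1), by grind⟩ : MvPolynomial (TriIdx n) ℝ) else 0) =
      ∑ j ∈ Finset.Icc (i + 1) n, if a = i ∧ b = j then triX n (i + 1) j else 0 := by
    rw [← Finset.sum_attach _ (fun j => if a = i ∧ b = j then triX n (i + 1) j else 0)]
    refine Finset.sum_congr rfl fun j _ => ?_
    have hj := Finset.mem_Icc.mp j.2
    rw [triX, dif_pos (by omega)]
  rw [hsum]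
  split_ifs <;> simp_all [Finset.sum_ite_eq]
  omega

theorem Egen_triX (n i b : ℕ) (h1 : 1 ≤ i) (h2 : i ≤ n) (hib : i ≤ b) (hb : b ≤ n) :
    Egen n i h1 h2 (triX n i b) = if b = i then -1 else -triX n (i + 1) b := by
  rw [triX, dif_pos ⟨h1, hib, hb⟩, Egen_X]
  simp

/-- The derivation `−∂/∂x_{1k} − Σ_{j=k+1}^{n} x_{k+1,j} ∂/∂x_{1j}`, given by its values on the
coordinates. -/
noncomputable def iterBracket (n k : ℕ) :
    Derivation ℝ (MvPolynomial (TriIdx n) ℝ) (MvPolynomial (TriIdx n) ℝ) :=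
  mkDerivation ℝ fun v =>
    if v.1.1 = 1 then (if v.1.2 = k then -1 else if k < v.1.2 then -triX n (k + 1) v.1.2 else 0)
    else 0

theorem iterBracket_triX_of_ne_one (n k a b : ℕ) (ha : a ≠ 1) :
    iterBracket n k (triX n a b) = 0 := by
  unfold triX
  split_ifs
  · simp [iterBracket, mkDerivation_X, ha]
  · simp

theorem iterBracket_one (n : ℕ) (hn : 1 ≤ n) : iterBracket n 1 = Egen n 1 le_rfl hn := by
  refine derivation_ext fun v => ?_
  rw [iterBracket, mkDerivation_X, Egen_X]
  grind

theorem iterBracket_self (n : ℕ) (hn : 1 ≤ n) :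
    iterBracket n n = - pderiv (⟨(1, n), le_rfl, hn, le_rfl⟩ : TriIdx n) := by
  classical
  refine derivation_ext fun v => ?_
  rw [iterBracket, mkDerivation_X, Derivation.neg_apply, pderiv_X, Pi.single_apply]
  grind

theorem lie_iterBracket_Egen (n k : ℕ) (h : k + 1 ≤ n) :
    ⁅iterBracket n k, Egen n (k + 1) (Nat.le_add_left 1 k) h⁆ = iterBracket n (k + 1) := by
  refine derivation_ext fun v => ?_
  obtain ⟨⟨a, b⟩, ha, hab, hb⟩ := v
  have hE :
      iterBracket n k (Egen n (k + 1) (Nat.le_add_left 1 k) h (X ⟨(a, b), ha, hab, hb⟩)) = 0 := by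
    rw [Egen_X]
    split_ifs <;> simp [iterBracket_triX_of_ne_one]
  rw [Derivation.commutator_apply, hE, zero_sub, iterBracket, iterBracket, mkDerivation_X,
    mkDerivation_X]
  dsimp only
  split_ifs <;> simp_all [Egen_triX] <;> omega

/-- The iterated Lie bracket `[⋯[[E_1, E_2], E_3], ⋯, E_n]` of the derivations `E_i`
equals the derivation `−∂/∂x_{1n}` (for `n = 1` this reads `E_1 = −∂/∂x_{11}`). -/
theorem stmt0 (n : ℕ) (hn : 1 ≤ n)
    (B : ℕ → Derivation ℝ (MvPolynomial (TriIdx n) ℝ) (MvPolynomial (TriIdx n) ℝ))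
    (hB1 : B 1 = Egen n 1 le_rfl hn)
    (hBstep : ∀ i, 1 ≤ i → ∀ h2 : i + 1 ≤ n,
      B (i + 1) = ⁅B i, Egen n (i + 1) (by omega) h2⁆) :
    B n = - pderiv (⟨(1, n), le_rfl, hn, le_rfl⟩ : TriIdx n) := by
  have hB : ∀ k, 1 ≤ k → k ≤ n → B k = iterBracket n k := by
    intro k hk
    induction k, hk using Nat.le_induction with
    | base => intro _; rw [hB1, iterBracket_one]
    | succ k hk ih =>
      intro hkn
      rw [hBstep k hk hkn, ih (by omega), lie_iterBracket_Egen]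
  rw [hB n hn le_rfl, iterBracket_self n hn]
end

section
/- Fix n ≥ 1, indices 1 ≤ j ≤ n, k ≥ 1 with j + k ≤ n+1, integers 1 ≤ i_k ≤ ⋯ ≤ i_1 ≤ j, and 1 ≤ r ≤ k. Set l = j + r − 1 − i_r and assume 1 ≤ l ≤ n. Let Q′ denote Q^j with the r-th index i_r replaced by i_r + 1 (the determinant being 0 if the resulting row list has a repeated or out-of-range entry). Then, as an identity of rational functions in the variables x_{ab} and t: if l ≠ j, applying the substitution Φ^l_t to every entry of the defining submatrix of Q^j_{i_1,…,i_k} yields the determinant Q′·t + Q^j_{i_1,…,i_k}; if l = j, it yields (Q′·t + Q^j_{i_1,…,i_k})/(1 + x_{jj}t). -/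
/-- Constructor for elements of `TriIdx n`. -/
def mk' {n : ℕ} (a b : ℕ) (h1 : 1 ≤ a) (h2 : a ≤ b) (h3 : b ≤ n) : TriIdx n :=
  ⟨(a, b), h1, h2, h3⟩

/-- The matrix `T`: `T_{ab} = x_{ab}` for `a ≤ b`, `T_{ab} = 1` for `a = b+1`, and
`T_{ab} = 0` otherwise (in particular whenever an index lies outside `{1,…,n}`). -/
noncomputable def Tmat (n : ℕ) (x : TriIdx n → ℝ) (a b : ℕ) : ℝ :=
  if h : 1 ≤ a ∧ a ≤ b ∧ b ≤ n then x (mk' a b h.1 h.2.1 h.2.2)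
  else if a = b + 1 ∧ 1 ≤ b ∧ a ≤ n then 1
  else 0

/-- The minor `Q^j_{i_1,…,i_k}`: the determinant of the `k×k` matrix whose `(p,q)` entry is
`T_{j+p−i_p, j+q−1}` (`p`, `q` running over `1,…,k`). -/
noncomputable def Qmin (n : ℕ) (x : TriIdx n → ℝ) (j k : ℕ) (i : Fin k → ℕ) : ℝ :=
  Matrix.det (Matrix.of fun p q : Fin k =>
    Tmat n x (j + (p : ℕ) + 1 - i p) (j + (q : ℕ)))

/-- The substitution `Φ^i_t`. -/
noncomputable def Phi {n : ℕ} (i : ℕ) (h1 : 1 ≤ i) (h2 : i ≤ n) (t : ℝ)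
    (x : TriIdx n → ℝ) : TriIdx n → ℝ := fun v =>
  if v.1.2 = i then
    x v / (1 + x (mk' i i h1 le_rfl h2) * t)
  else if h : v.1.2 + 1 = i then
    -(x (mk' v.1.1 i v.2.1 (by have := v.2.2.1; omega) h2)
        - x v * x (mk' i i h1 le_rfl h2)) * t + x v
  else if h' : v.1.1 = i + 1 then
    x (mk' i v.1.2 h1 (by have := v.2.2.1; omega) v.2.2.2) * t + x v
  else x v

def addRowSucc (l : ℕ) (t : ℝ) (f : ℕ → ℕ → ℝ) (a b : ℕ) : ℝ :=
  f a b + if a = l + 1 then t * f l b else 0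

noncomputable def mixCols (l : ℕ) (s t : ℝ) (f : ℕ → ℕ → ℝ) (a b : ℕ) : ℝ :=
  if b = l then f a b / s else if b + 1 = l then s * f a b - t * f a (b + 1) else f a b

theorem Phi_mk' {n l a b : ℕ} (hl1 : 1 ≤ l) (hl2 : l ≤ n) (t : ℝ) (x : TriIdx n → ℝ)
    (h1 : 1 ≤ a) (h2 : a ≤ b) (h3 : b ≤ n) :
    Phi l hl1 hl2 t x (mk' a b h1 h2 h3) =
      if b = l then x (mk' a b h1 h2 h3) / (1 + x (mk' l l hl1 le_rfl hl2) * t)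
      else if h : b + 1 = l then
        -(x (mk' a l h1 (by omega) hl2) - x (mk' a b h1 h2 h3) * x (mk' l l hl1 le_rfl hl2)) * t
          + x (mk' a b h1 h2 h3)
      else if h' : a = l + 1 then x (mk' l b hl1 (by omega) h3) * t + x (mk' a b h1 h2 h3)
      else x (mk' a b h1 h2 h3) := rfl

theorem Tmat_Phi_eq_mixCols_addRowSucc {n l a b : ℕ} (hl1 : 1 ≤ l) (hl2 : l ≤ n) (t : ℝ)
    (x : TriIdx n → ℝ) (hden : 1 + x (mk' l l hl1 le_rfl hl2) * t ≠ 0) (ha : a ≤ n) (hb : 1 ≤ b) :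
    Tmat n (Phi l hl1 hl2 t x) a b =
      mixCols l (1 + x (mk' l l hl1 le_rfl hl2) * t) t (addRowSucc l t (Tmat n x)) a b := by
  unfold mixCols addRowSucc Tmat
  simp only [Phi_mk']
  split_ifs <;> (try casesm* _ ∧ _) <;> subst_vars <;>
    first | omega | ring1 | (rw [eq_div_iff hden]; ring1)

/-- Rows and columns are indexed from `0` here, so row `p` of `Q^j_{i}` is `j + p + 1 - i p`. -/
def minorMatrix (f : ℕ → ℕ → ℝ) (j k : ℕ) (i : Fin k → ℕ) : Matrix (Fin k) (Fin k) ℝ :=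
  Matrix.of fun p q => f (j + p + 1 - i p) (j + q)

theorem Qmin_eq_det_minorMatrix (n : ℕ) (x : TriIdx n → ℝ) (j k : ℕ) (i : Fin k → ℕ) :
    Qmin n x j k i = (minorMatrix (Tmat n x) j k i).det := rfl

theorem strictMono_minorRow {j k : ℕ} {i : Fin k → ℕ} (hij : ∀ p, i p ≤ j) (hmono : Antitone i) :
    StrictMono fun p : Fin k => j + p + 1 - i p := by
  intro p q hpq
  have := hmono hpq.le
  have := hij p
  have : (p : ℕ) < q := hpq
  show j + p + 1 - i p < j + q + 1 - i q
  omega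

section Determinants

open Matrix

variable (f : ℕ → ℕ → ℝ) {j k l : ℕ} (i : Fin k → ℕ)

theorem det_minorMatrix_addRowSucc {r : Fin k} (t : ℝ)
    (hrow : ∀ p, j + p + 1 - i p = l + 1 ↔ p = r) :
    (minorMatrix (addRowSucc l t f) j k i).det =
      (minorMatrix f j k i).det + t * (minorMatrix f j k (Function.update i r (i r + 1))).det := by
  set A := minorMatrix f j k i
  have hr : j + r + 1 - (i r + 1) = l := by have := (hrow r).2 rfl; omega
  have hA' : minorMatrix f j k (Function.update i r (i r + 1)) =
      A.updateRow r fun q => f l (j + q) := by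
    ext p q
    by_cases hp : p = r
    · subst hp
      simp [minorMatrix, hr]
    · simp [minorMatrix, A, hp]
  have hA : minorMatrix (addRowSucc l t f) j k i =
      A.updateRow r (A r + t • fun q : Fin k => f l (j + q)) := by
    ext p q
    by_cases hp : p = r
    · subst hp
      simp [minorMatrix, addRowSucc, A, hrow]
    · simp [minorMatrix, addRowSucc, A, hp, hrow]
  rw [hA, det_updateRow_add, updateRow_eq_self, det_updateRow_smul, hA']

theorem minorMatrix_mixCols_of_lt (s t : ℝ) (hl : l < j) :
    minorMatrix (mixCols l s t f) j k i = minorMatrix f j k i := by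
  ext p q
  simp only [minorMatrix, mixCols, of_apply]
  rw [if_neg (by omega), if_neg (by omega)]

theorem det_minorMatrix_mixCols_self (s t : ℝ) (hk : 0 < k) :
    (minorMatrix (mixCols j s t f) j k i).det = (minorMatrix f j k i).det / s := by
  set A := minorMatrix f j k i
  let q₀ : Fin k := ⟨0, hk⟩
  have hA : minorMatrix (mixCols j s t f) j k i = A.updateCol q₀ (s⁻¹ • fun p => A p q₀) := by
    ext p q
    by_cases hq : q = q₀
    · subst hq
      simp [minorMatrix, mixCols, A, q₀, div_eq_inv_mul]
    · have : (q : ℕ) ≠ 0 := fun h => hq (Fin.ext h)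
      simp only [minorMatrix, mixCols, of_apply, A, updateCol_ne hq]
      rw [if_neg (by omega), if_neg (by omega)]
  rw [hA, det_updateCol_smul, updateCol_eq_self, inv_mul_eq_div]

/-- For `j < l`, columns `l - 1` and `l` both lie in the minor, and on them `mixCols` acts by
the matrix `!![s, 0; -t, s⁻¹]` of determinant `1`. -/
theorem det_minorMatrix_mixCols_of_lt_of_lt {s : ℝ} (t : ℝ) (hs : s ≠ 0) (hjl : j < l)
    (hl : l < j + k) :
    (minorMatrix (mixCols l s t f) j k i).det = (minorMatrix f j k i).det := by
  set A := minorMatrix f j k i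
  obtain ⟨c, rfl⟩ : ∃ c, l = j + c + 1 := ⟨l - j - 1, by omega⟩
  let q₁ : Fin k := ⟨c, by omega⟩
  let q₂ : Fin k := ⟨c + 1, by omega⟩
  have hq : q₁ ≠ q₂ := by simp [q₁, q₂, Fin.ext_iff]
  let B := A.updateCol q₂ (s⁻¹ • fun p => A p q₂)
  have hB : minorMatrix (mixCols (j + c + 1) s t f) j k i =
      B.updateCol q₁ (s • fun p => B p q₁ + (-t) • B p q₂) := by
    ext p q
    by_cases h₁ : q = q₁
    · subst h₁
      have hB₁ : B p q₁ = A p q₁ := updateCol_ne hq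
      have hB₂ : B p q₂ = s⁻¹ * A p q₂ := by simp [B]
      rw [updateCol_self, Pi.smul_apply, hB₁, hB₂]
      simp only [minorMatrix, mixCols, of_apply, A, q₁, q₂]
      rw [if_neg (by omega), if_pos trivial, smul_eq_mul, smul_eq_mul, ← add_assoc]
      field_simp
      ring
    by_cases h₂ : q = q₂
    · subst h₂
      simp [minorMatrix, mixCols, A, B, q₂, Ne.symm hq, ← add_assoc, div_eq_inv_mul]
    · have h₁' : (q : ℕ) ≠ c := fun h => h₁ (Fin.ext h)
      have h₂' : (q : ℕ) ≠ c + 1 := fun h => h₂ (Fin.ext h)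
      simp only [minorMatrix, mixCols, of_apply, A, B, updateCol_ne h₁, updateCol_ne h₂]
      rw [if_neg (by omega), if_neg (by omega)]
  rw [hB, det_updateCol_smul, det_updateCol_add_smul_self B hq, det_updateCol_smul,
    updateCol_eq_self, ← mul_assoc, mul_inv_cancel₀ hs, one_mul]

theorem det_minorMatrix_mixCols {s : ℝ} (t : ℝ) (hs : s ≠ 0) (hl : l < j + k) :
    (minorMatrix (mixCols l s t f) j k i).det =
      if l = j then (minorMatrix f j k i).det / s else (minorMatrix f j k i).det := by
  rcases lt_trichotomy l j with hlj | rfl | hjl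
  · rw [minorMatrix_mixCols_of_lt f i s t hlj, if_neg hlj.ne]
  · rw [det_minorMatrix_mixCols_self f i s t (by omega), if_pos rfl]
  · rw [det_minorMatrix_mixCols_of_lt_of_lt f i t hs hjl hl, if_neg hjl.ne']

end Determinants

theorem stmt5_general (n j k : ℕ) (hj1 : 1 ≤ j)
    (hjk : j + k ≤ n + 1)
    (i : Fin k → ℕ) (hi1 : ∀ p, 1 ≤ i p) (hij : ∀ p, i p ≤ j)
    (hmono : ∀ p q : Fin k, p ≤ q → i q ≤ i p)
    (r : Fin k) (l : ℕ) (hl : l = j + (r : ℕ) - i r)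
    (hl1 : 1 ≤ l) (hl2 : l ≤ n)
    (x : TriIdx n → ℝ) (t : ℝ)
    (hden : 1 + x (mk' l l hl1 le_rfl hl2) * t ≠ 0) :
    Qmin n (Phi l hl1 hl2 t x) j k i =
      if l ≠ j then
        Qmin n x j k (Function.update i r (i r + 1)) * t + Qmin n x j k i
      else
        (Qmin n x j k (Function.update i r (i r + 1)) * t + Qmin n x j k i)
          / (1 + x (mk' l l hl1 le_rfl hl2) * t) := by
  have hrows : ∀ p, j + p + 1 - i p = l + 1 ↔ p = r := by
    intro p
    rw [show l + 1 = j + r + 1 - i r by have := hij r; omega]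
    exact (strictMono_minorRow hij hmono).injective.eq_iff
  have hentries : minorMatrix (Tmat n (Phi l hl1 hl2 t x)) j k i =
      minorMatrix (mixCols l (1 + x (mk' l l hl1 le_rfl hl2) * t) t (addRowSucc l t (Tmat n x)))
        j k i := by
    ext p q
    exact Tmat_Phi_eq_mixCols_addRowSucc hl1 hl2 t x hden (by have := hi1 p; omega) (by omega)
  simp only [Qmin_eq_det_minorMatrix]
  rw [hentries, det_minorMatrix_mixCols _ _ _ hden (by omega),
    det_minorMatrix_addRowSucc _ _ _ hrows, ite_not]
  split_ifs <;> ring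

/-- Transformation of the minor `Q^j_{i_1,…,i_k}` under the substitution `Φ^l_t`, where
`l = j + r − 1 − i_r` for some `1 ≤ r ≤ k`: applying `Φ^l_t` to every entry yields
`Q′·t + Q^j_{i_1,…,i_k}` when `l ≠ j`, and `(Q′·t + Q^j_{i_1,…,i_k})/(1 + x_{jj}t)` when
`l = j`, `Q′` being the minor with `i_r` replaced by `i_r + 1`. -/
theorem stmt5 (n j k : ℕ) (hn : 1 ≤ n) (hj1 : 1 ≤ j) (hjn : j ≤ n)
    (hk : 1 ≤ k) (hjk : j + k ≤ n + 1)
    (i : Fin k → ℕ) (hi1 : ∀ p, 1 ≤ i p) (hij : ∀ p, i p ≤ j)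
    (hmono : ∀ p q : Fin k, p ≤ q → i q ≤ i p)
    (r : Fin k) (l : ℕ) (hl : l = j + (r : ℕ) - i r)
    (hl1 : 1 ≤ l) (hl2 : l ≤ n)
    (x : TriIdx n → ℝ) (t : ℝ)
    (hden : 1 + x (mk' l l hl1 le_rfl hl2) * t ≠ 0) :
    Qmin n (Phi l hl1 hl2 t x) j k i =
      if l ≠ j then
        Qmin n x j k (Function.update i r (i r + 1)) * t + Qmin n x j k i
      else
        (Qmin n x j k (Function.update i r (i r + 1)) * t + Qmin n x j k i)
          / (1 + x (mk' l l hl1 le_rfl hl2) * t) :=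
  stmt5_general n j k hj1 hjk i hi1 hij hmono r l hl hl1 hl2 x t hden
end

section
/- Fix n ≥ 1, indices 1 ≤ j ≤ n, k ≥ 0 with j + k ≤ n, and integers 1 ≤ i_k ≤ ⋯ ≤ i_1 ≤ j. Set l = j + k and let Q′ = Q^j_{i_1,…,i_k,1} (the (k+1)×(k+1) minor obtained by appending the index i_{k+1} = 1, i.e. adjoining row j+k and column j+k). Then, as an identity of rational functions in the variables x_{ab} and t: if k ≥ 1, applying the substitution Φ^{j+k}_t to every entry of the defining submatrix of Q^j_{i_1,…,i_k} yields Q′·t + Q^j_{i_1,…,i_k}; if k = 0 (so l = j), one has the identity 1 = (Q^j_1 · t + 1)/(1 + x_{jj}t), i.e. Q^j_1 = x_{jj}. -/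
/-! The substitution `Φ^l_t`, `l = j + k`, touches no entry of the minor `Q = Q^j_{i_1,…,i_k}`
except those of its last column (column `l - 1` of `T`), which becomes
`(1 + x_{ll} t) · (column l - 1) - t · (column l)`. By multilinearity
`Φ(Q) = (1 + x_{ll} t) Q - t D`, where `D` is `Q` with its last column taken from column `l`
of `T`. Appending row and column `l` gives `Q'`, whose last row is `(0, …, 0, 1, x_{ll})`;
expanding along it gives `Q' = x_{ll} Q - D`, and the identity follows. -/

namespace Matrix

variable {R ι : Type*} [CommRing R] [Fintype ι] [DecidableEq ι]

theorem det_updateCol_smul_self_add_smul (M : Matrix ι ι R) (c : ι) (a b : R) (v : ι → R) :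
    (M.updateCol c fun p => a * M p c + b * v p).det = a * M.det + b * (M.updateCol c v).det := by
  have hcol : (fun p => a * M p c + b * v p) = a • (fun p => M p c) + b • v := rfl
  rw [hcol, det_updateCol_add, det_updateCol_smul, det_updateCol_smul, updateCol_eq_self]

theorem det_eq_of_last_row_eq_zero_off_last_two {m : ℕ}
    (A : Matrix (Fin (m + 2)) (Fin (m + 2)) R)
    (hA : ∀ q : Fin m, A (Fin.last _) q.castSucc.castSucc = 0) :
    A.det = A (Fin.last _) (Fin.last _) * (A.submatrix Fin.castSucc Fin.castSucc).det
      - A (Fin.last _) (Fin.last m).castSucc *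
        ((A.submatrix Fin.castSucc Fin.castSucc).updateCol (Fin.last m)
          fun p => A p.castSucc (Fin.last _)).det := by
  have hminor : A.submatrix (Fin.last _).succAbove (Fin.last m).castSucc.succAbove =
      (A.submatrix Fin.castSucc Fin.castSucc).updateCol (Fin.last m)
        fun p => A p.castSucc (Fin.last _) := by
    ext p q
    refine Fin.lastCases ?_ (fun q => ?_) q
    · simp
    · simp [Fin.succAbove_castSucc_of_lt _ _ (Fin.castSucc_lt_last q)]
  rw [det_succ_row _ (Fin.last _), Fin.sum_univ_castSucc, Fin.sum_univ_castSucc,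
    Finset.sum_eq_zero fun q _ => by rw [hA q, mul_zero, zero_mul], hminor, Fin.succAbove_last]
  have hodd : Odd ((Fin.last (m + 1) : ℕ) + ((Fin.last m).castSucc : ℕ)) :=
    ⟨m, by simp only [Fin.val_last, Fin.val_castSucc]; ring⟩
  have heven : Even ((Fin.last (m + 1) : ℕ) + (Fin.last (m + 1) : ℕ)) := ⟨m + 1, rfl⟩
  rw [hodd.neg_one_pow, heven.neg_one_pow]
  ring

end Matrix

section Tmat

variable {n : ℕ} (x : TriIdx n → ℝ) {a b : ℕ}

theorem Tmat_of_le (h1 : 1 ≤ a) (h2 : a ≤ b) (h3 : b ≤ n) :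
    Tmat n x a b = x (mk' a b h1 h2 h3) :=
  dif_pos ⟨h1, h2, h3⟩

theorem Tmat_of_eq_succ (h : a = b + 1) (hb : 1 ≤ b) (ha : a ≤ n) : Tmat n x a b = 1 := by
  rw [Tmat, dif_neg (by omega), if_pos ⟨h, hb, ha⟩]

theorem Tmat_of_succ_lt (h : b + 1 < a) : Tmat n x a b = 0 := by
  rw [Tmat, dif_neg (by omega), if_neg (by omega)]

variable {l : ℕ} (hl1 : 1 ≤ l) (hln : l ≤ n) (t : ℝ)

theorem Phi_apply_of_ne (v : TriIdx n) (hl : v.1.2 ≠ l) (hpred : v.1.2 + 1 ≠ l)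
    (hsucc : v.1.1 ≠ l + 1) : Phi l hl1 hln t x v = x v := by
  rw [Phi, if_neg hl, dif_neg hpred, dif_neg hsucc]

theorem Phi_apply_of_succ_eq (v : TriIdx n) (hpred : v.1.2 + 1 = l) :
    Phi l hl1 hln t x v = (1 + x (mk' l l hl1 le_rfl hln) * t) * x v
      + (-t) * x (mk' v.1.1 l v.2.1 (by have := v.2.2.1; omega) hln) := by
  rw [Phi, if_neg (by omega), dif_pos hpred]
  ring

theorem Tmat_Phi_of_succ_lt (hb : b + 1 < l) :
    Tmat n (Phi l hl1 hln t x) a b = Tmat n x a b := by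
  by_cases h : 1 ≤ a ∧ a ≤ b ∧ b ≤ n
  · rw [Tmat_of_le _ h.1 h.2.1 h.2.2, Tmat_of_le _ h.1 h.2.1 h.2.2]
    exact Phi_apply_of_ne _ _ _ _ _ (show b ≠ l by omega) (show b + 1 ≠ l by omega)
      (show a ≠ l + 1 by omega)
  · simp only [Tmat, dif_neg h]

theorem Tmat_Phi_of_succ_eq (hb : b + 1 = l) (ha : 1 ≤ a) (hab : a ≤ b) :
    Tmat n (Phi l hl1 hln t x) a b =
      (1 + x (mk' l l hl1 le_rfl hln) * t) * Tmat n x a b + (-t) * Tmat n x a l := by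
  rw [Tmat_of_le _ ha hab (by omega), Tmat_of_le _ ha hab (by omega),
    Tmat_of_le _ ha (by omega) hln]
  exact Phi_apply_of_succ_eq _ _ _ _ _ hb

end Tmat

section Minor

variable (n : ℕ) (x : TriIdx n → ℝ) (j : ℕ) {k : ℕ} (i : Fin k → ℕ)

noncomputable def Qcol (b : ℕ) : Fin k → ℝ := fun p => Tmat n x (j + p + 1 - i p) b

noncomputable def Qmat : Matrix (Fin k) (Fin k) ℝ := Matrix.of fun p q => Qcol n x j i (j + q) p

theorem Qmin_eq_det_Qmat : Qmin n x j k i = (Qmat n x j i).det := rfl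

end Minor

theorem Qmin_Phi {n j m : ℕ} (x : TriIdx n → ℝ) (t : ℝ) (i : Fin (m + 1) → ℕ)
    (hi1 : ∀ p, 1 ≤ i p) (hij : ∀ p, i p ≤ j) (hl1 : 1 ≤ j + (m + 1))
    (hln : j + (m + 1) ≤ n) :
    Qmin n (Phi (j + (m + 1)) hl1 hln t x) j (m + 1) i =
      (1 + x (mk' _ _ hl1 le_rfl hln) * t) * Qmin n x j (m + 1) i
        + (-t) * ((Qmat n x j i).updateCol (Fin.last m) (Qcol n x j i (j + (m + 1)))).det := by
  have hcol : Qmat n (Phi (j + (m + 1)) hl1 hln t x) j i =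
      (Qmat n x j i).updateCol (Fin.last m) fun p =>
        (1 + x (mk' _ _ hl1 le_rfl hln) * t) * Qmat n x j i p (Fin.last m)
          + (-t) * Qcol n x j i (j + (m + 1)) p := by
    ext p q
    have hp1 := hi1 p
    have hpj := hij p
    refine Fin.lastCases ?_ (fun q => ?_) q
    · simp only [Qmat, Qcol, Matrix.of_apply, Matrix.updateCol_self, Fin.val_last]
      exact Tmat_Phi_of_succ_eq _ _ _ _ (by omega) (by omega) (by omega)
    · rw [Matrix.updateCol_ne (Fin.castSucc_lt_last q).ne]
      simp only [Qmat, Qcol, Matrix.of_apply, Fin.val_castSucc]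
      exact Tmat_Phi_of_succ_lt _ _ _ _ (by omega)
  rw [Qmin_eq_det_Qmat, hcol, Matrix.det_updateCol_smul_self_add_smul, Qmin_eq_det_Qmat]

theorem Qmin_snoc_one {n j m : ℕ} (x : TriIdx n → ℝ) (i : Fin (m + 1) → ℕ) (hj : 1 ≤ j)
    (hln : j + (m + 1) ≤ n) :
    Qmin n x j (m + 1 + 1) (Fin.snoc i 1) =
      x (mk' _ _ (by omega) le_rfl hln) * Qmin n x j (m + 1) i
        - ((Qmat n x j i).updateCol (Fin.last m) (Qcol n x j i (j + (m + 1)))).det := by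
  rw [Qmin_eq_det_Qmat, Matrix.det_eq_of_last_row_eq_zero_off_last_two]
  · have hll : Qmat n x j (Fin.snoc i 1) (Fin.last _) (Fin.last _) =
        x (mk' _ _ (by omega) le_rfl hln) := by
      simp only [Qmat, Qcol, Matrix.of_apply, Fin.snoc_last, Fin.val_last]
      exact Tmat_of_le _ _ _ _
    have hsub :
        (Qmat n x j (Fin.snoc i 1)).submatrix Fin.castSucc Fin.castSucc = Qmat n x j i := by
      ext p q
      simp [Qmat, Qcol]
    have hsubdiag : Qmat n x j (Fin.snoc i 1) (Fin.last _) (Fin.last m).castSucc = 1 := by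
      simp only [Qmat, Qcol, Matrix.of_apply, Fin.snoc_last, Fin.val_last, Fin.val_castSucc]
      exact Tmat_of_eq_succ _ (by omega) (by omega) (by omega)
    have hlastcol : (fun p : Fin (m + 1) => Qmat n x j (Fin.snoc i 1) p.castSucc (Fin.last _)) =
        Qcol n x j i (j + (m + 1)) := by
      ext p
      simp [Qmat, Qcol]
    rw [hll, hsub, hsubdiag, hlastcol, one_mul, Qmin_eq_det_Qmat]
  · intro q
    simp only [Qmat, Qcol, Matrix.of_apply, Fin.snoc_last, Fin.val_last, Fin.val_castSucc]
    exact Tmat_of_succ_lt _ (by omega)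

/-- Transformation of the minor `Q^j_{i_1,…,i_k}` under the substitution `Φ^{j+k}_t`
(an edge of the second type): for `k ≥ 1` applying `Φ^{j+k}_t` to every entry yields
`Q^j_{i_1,…,i_k,1}·t + Q^j_{i_1,…,i_k}`; for `k = 0` one has the identity
`1 = (Q^j_1·t + 1)/(1 + x_{jj}t)`, i.e. `Q^j_1 = x_{jj}`. -/
theorem stmt6 (n j k : ℕ) (hj1 : 1 ≤ j) (hjk : j + k ≤ n)
    (i : Fin k → ℕ) (hi1 : ∀ p, 1 ≤ i p) (hij : ∀ p, i p ≤ j)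
    (x : TriIdx n → ℝ) (t : ℝ) :
    (1 ≤ k →
      Qmin n (Phi (j + k) (by omega) hjk t x) j k i =
        Qmin n x j (k + 1) (Fin.snoc i 1) * t + Qmin n x j k i) ∧
    (k = 0 → Qmin n x j 1 (fun _ => 1) = x (mk' j j hj1 le_rfl (by omega))) := by
  refine ⟨fun hk => ?_, fun _ => ?_⟩
  · obtain ⟨m, rfl⟩ := Nat.exists_eq_add_of_le' hk
    rw [Qmin_Phi x t i hi1 hij _ hjk, Qmin_snoc_one x i hj1 hjk]
    ring
  · rw [Qmin_eq_det_Qmat, Matrix.det_unique]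
    exact Tmat_of_le _ _ _ _
end

section
/- Fix n ≥ 1, an index 1 ≤ j ≤ n, set k = n + 1 − j, and let integers 1 ≤ i_k ≤ ⋯ ≤ i_2 ≤ i_1 = j be given. Let k′ = 1 + #{p ∈ {2,…,k} : i_p > 1}. Then, for a parameter z ≠ 0, applying the substitution Φ^0_t (which replaces x_{1n} by x_{1n} + t/z and fixes all other variables) to every entry of the defining submatrix of Q^j_{j, i_2, …, i_k} yields Q^j_{j, i_2, …, i_k} + (−1)^{n−j} z^{−1} t · Q^j_{i_2−1, i_3−1, …, i_{k′}−1} (where the second minor has k′ − 1 indices, and equals 1 if k′ = 1). -/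
/-- The substitution `Φ⁰_t`: `x_{1n} ↦ x_{1n} + t/z`, all other variables fixed. -/
noncomputable def Phi0 {n : ℕ} (hn : 1 ≤ n) (z t : ℝ) (x : TriIdx n → ℝ) :
    TriIdx n → ℝ :=
  Function.update x (mk' 1 n le_rfl hn le_rfl)
    (x (mk' 1 n le_rfl hn le_rfl) + t / z)

lemma Tmat_zero {n : ℕ} {x : TriIdx n → ℝ} {a b : ℕ} (h : b + 1 < a) :
    Tmat n x a b = 0 := by
  unfold Tmat
  rw [dif_neg (by omega), if_neg (by omega)]

lemma Tmat_one {n : ℕ} {x : TriIdx n → ℝ} {a b : ℕ}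
    (h1 : a = b + 1) (h2 : 1 ≤ b) (h3 : a ≤ n) : Tmat n x a b = 1 := by
  unfold Tmat
  rw [dif_neg (by omega), if_pos ⟨h1, h2, h3⟩]

lemma Tmat_Phi0 {n : ℕ} (hn : 1 ≤ n) (z t : ℝ) (x : TriIdx n → ℝ) (a b : ℕ) :
    Tmat n (Phi0 hn z t x) a b =
      Tmat n x a b + if a = 1 ∧ b = n then t / z else 0 := by
  by_cases h : 1 ≤ a ∧ a ≤ b ∧ b ≤ n
  · unfold Tmat
    rw [dif_pos h, dif_pos h]
    by_cases hab : a = 1 ∧ b = n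
    · rw [if_pos hab]
      have he : mk' a b h.1 h.2.1 h.2.2 = mk' 1 n le_rfl hn le_rfl :=
        Subtype.ext (by simp [mk', hab.1, hab.2])
      rw [he]
      unfold Phi0
      rw [Function.update_self]
    · rw [if_neg hab, add_zero]
      unfold Phi0
      refine Function.update_of_ne ?_ _ _
      intro hcon
      apply hab
      have hv := congrArg Subtype.val hcon
      simp only [mk', Prod.mk.injEq] at hv
      exact ⟨hv.1, hv.2⟩
  · have hab : ¬(a = 1 ∧ b = n) := fun hh => h ⟨by omega, by omega, by omega⟩
    rw [if_neg hab, add_zero]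
    unfold Tmat
    rw [dif_neg h, dif_neg h]

lemma card_filter_lt (k c : ℕ) (hck : c ≤ k) :
    (Finset.univ.filter fun q : Fin k => 1 ≤ (q : ℕ) ∧ (q : ℕ) < c).card = c - 1 := by
  have h : ∀ m ∈ Finset.Ico 1 c, m < k := fun m hm =>
    lt_of_lt_of_le (Finset.mem_Ico.mp hm).2 hck
  have he : (Finset.univ.filter fun q : Fin k => 1 ≤ (q : ℕ) ∧ (q : ℕ) < c)
      = Finset.attachFin (Finset.Ico 1 c) h := by
    ext q
    simp [Finset.mem_attachFin, Finset.mem_Ico]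
  rw [he, Finset.card_attachFin, Nat.card_Ico]

/-- Transformation of the maximal minor `Q^j_{j,i_2,…,i_k}` (`k = n+1−j`, `i_1 = j`) under
the substitution `Φ⁰_t`: applying `Φ⁰_t` to every entry yields
`Q^j_{j,i_2,…,i_k} + (−1)^{n−j} z^{−1} t · Q^j_{i_2−1,…,i_{k′}−1}`, where
`k′ = 1 + #{p ∈ {2,…,k} : i_p > 1}` (the second minor has `k′−1` indices and equals `1`
when `k′ = 1`). -/
theorem stmt7 (n j : ℕ) (hn : 1 ≤ n) (hj1 : 1 ≤ j) (hjn : j ≤ n)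
    (k : ℕ) (hk : j + k = n + 1) (hk0 : 0 < k)
    (i : Fin k → ℕ) (hi1 : ∀ p, 1 ≤ i p) (hij : ∀ p, i p ≤ j)
    (hmono : ∀ p q : Fin k, p ≤ q → i q ≤ i p)
    (hhead : i ⟨0, hk0⟩ = j)
    (k' : ℕ)
    (hk' : k' = 1 + (Finset.univ.filter fun p : Fin k => 1 ≤ (p : ℕ) ∧ 1 < i p).card)
    (hk'le : k' ≤ k)
    (z : ℝ) (hz : z ≠ 0) (x : TriIdx n → ℝ) (t : ℝ) :
    Qmin n (Phi0 hn z t x) j k i =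
      Qmin n x j k i +
        (-1 : ℝ) ^ (n - j) * z⁻¹ * t *
          Qmin n x j (k' - 1)
            (fun p => i ⟨(p : ℕ) + 1, by have := p.isLt; omega⟩ - 1) := by
  obtain ⟨m, rfl⟩ : ∃ m, k = m + 1 := ⟨k - 1, by omega⟩
  have hm : m = n - j := by omega
  have hk'1 : 1 ≤ k' := by omega
  have hcard : (Finset.univ.filter fun p : Fin (m+1) => 1 ≤ (p : ℕ) ∧ 1 < i p).card
      = k' - 1 := by omega
  -- i p = 1 for p ≥ k'
  have factA : ∀ p : Fin (m+1), k' ≤ (p : ℕ) → i p = 1 := by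
    intro p hp
    by_contra hne
    have h2 : 2 ≤ i p := by have := hi1 p; omega
    have hsub : (Finset.univ.filter fun q : Fin (m+1) =>
        1 ≤ (q : ℕ) ∧ (q : ℕ) < (p : ℕ) + 1)
        ⊆ (Finset.univ.filter fun q : Fin (m+1) => 1 ≤ (q : ℕ) ∧ 1 < i q) := by
      intro q hq
      simp only [Finset.mem_filter, Finset.mem_univ, true_and] at hq ⊢
      refine ⟨hq.1, ?_⟩
      have hle : i p ≤ i q := hmono q p (by rw [Fin.le_def]; omega)
      omega
    have hc := Finset.card_le_card hsub
    rw [card_filter_lt _ _ (by have := p.isLt; omega), hcard] at hc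
    omega
  -- i p ≥ 2 for 1 ≤ p < k'
  have factB : ∀ p : Fin (m+1), 1 ≤ (p : ℕ) → (p : ℕ) < k' → 2 ≤ i p := by
    intro p hp1 hpk
    by_contra hlt
    have hle1 : i p ≤ 1 := by omega
    have hsub : (Finset.univ.filter fun q : Fin (m+1) => 1 ≤ (q : ℕ) ∧ 1 < i q)
        ⊆ (Finset.univ.filter fun q : Fin (m+1) =>
          1 ≤ (q : ℕ) ∧ (q : ℕ) < (p : ℕ)) := by
      intro q hq
      simp only [Finset.mem_filter, Finset.mem_univ, true_and] at hq ⊢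
      refine ⟨hq.1, ?_⟩
      by_contra hge
      have hle : i q ≤ i p := hmono p q (by rw [Fin.le_def]; omega)
      omega
    have hc := Finset.card_le_card hsub
    rw [hcard, card_filter_lt _ _ (by have := p.isLt; omega)] at hc
    omega
  have hi0 : i 0 = j := by
    rw [show (0 : Fin (m+1)) = ⟨0, hk0⟩ from rfl] at *
    exact hhead
  set B : Matrix (Fin (m+1)) (Fin (m+1)) ℝ :=
    Matrix.of fun p q : Fin (m+1) => Tmat n x (j + (p : ℕ) + 1 - i p) (j + (q : ℕ))
    with hBdef
  -- the substituted matrix is B with row 0 perturbed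
  have hA : (Matrix.of fun p q : Fin (m+1) =>
      Tmat n (Phi0 hn z t x) (j + (p : ℕ) + 1 - i p) (j + (q : ℕ)))
      = B.updateRow 0 (B 0 + (t / z) • (Pi.single (Fin.last m) 1 : Fin (m+1) → ℝ)) := by
    ext p q
    rw [Matrix.updateRow_apply]
    simp only [Matrix.of_apply, Tmat_Phi0, hBdef, Pi.add_apply, Pi.smul_apply,
      Pi.single_apply, smul_eq_mul]
    by_cases hp : p = 0
    · subst hp
      rw [if_pos rfl]
      congr 1
      rcases eq_or_ne q (Fin.last m) with hq | hq
      · subst hq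
        rw [if_pos ⟨by simp [hi0], by simp [Fin.val_last]; omega⟩, if_pos rfl, mul_one]
      · rw [if_neg ?_, if_neg hq, mul_zero]
        rintro ⟨-, h2⟩
        exact hq (Fin.ext (by simp only [Fin.val_last]; omega))
    · rw [if_neg hp]
      have hpv : 1 ≤ (p : ℕ) := by
        rcases Nat.eq_zero_or_pos (p : ℕ) with h0 | h0
        · exact absurd (Fin.ext h0) hp
        · exact h0
      have hcond : ¬(j + (p : ℕ) + 1 - i p = 1 ∧ j + (q : ℕ) = n) := by
        have := hij p
        omega
      rw [if_neg hcond, add_zero]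
  -- cofactor computation
  have hCdet : (B.updateRow 0 (Pi.single (Fin.last m) 1)).det
      = (-1 : ℝ) ^ m * (B.submatrix Fin.succ Fin.castSucc).det := by
    rw [Matrix.det_succ_row_zero]
    rw [Finset.sum_eq_single (Fin.last m)]
    · have h1 : (B.updateRow 0 (Pi.single (Fin.last m) 1)) 0 (Fin.last m) = 1 := by
        rw [Matrix.updateRow_self]
        simp [Pi.single_apply]
      have hsub : (B.updateRow 0 (Pi.single (Fin.last m) 1)).submatrix
          Fin.succ Fin.castSucc = B.submatrix Fin.succ Fin.castSucc := by
        ext p q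
        simp [Matrix.submatrix_apply, Matrix.updateRow_apply, Fin.succ_ne_zero]
      rw [h1, mul_one, Fin.val_last, Fin.succAbove_last, hsub]
    · intro q _ hq
      have h0 : (B.updateRow 0 (Pi.single (Fin.last m) 1)) 0 q = 0 := by
        rw [Matrix.updateRow_self]
        simp [Pi.single_apply, hq]
      rw [h0, mul_zero, zero_mul]
    · intro h; exact absurd (Finset.mem_univ _) h
  -- the minor equals the smaller Q
  have hDdet : (B.submatrix Fin.succ Fin.castSucc).det
      = Qmin n x j (k' - 1)
          (fun p => i ⟨(p : ℕ) + 1, by have := p.isLt; omega⟩ - 1) := by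
    have hsum : (k' - 1) + (m - (k' - 1)) = m := by omega
    set σ : Fin (k' - 1) ⊕ Fin (m - (k' - 1)) ≃ Fin m :=
      finSumFinEquiv.trans (finCongr hsum) with hσ
    have hσl : ∀ p : Fin (k' - 1), ((σ (Sum.inl p)) : ℕ) = (p : ℕ) := by
      intro p; simp [hσ, finSumFinEquiv_apply_left]
    have hσr : ∀ p : Fin (m - (k' - 1)),
        ((σ (Sum.inr p)) : ℕ) = (k' - 1) + (p : ℕ) := by
      intro p; simp [hσ, finSumFinEquiv_apply_right]
    rw [← Matrix.det_submatrix_equiv_self σ (B.submatrix Fin.succ Fin.castSucc)]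
    rw [← Matrix.fromBlocks_toBlocks
      ((B.submatrix Fin.succ Fin.castSucc).submatrix σ σ)]
    have h21 : ((B.submatrix Fin.succ Fin.castSucc).submatrix σ σ).toBlocks₂₁ = 0 := by
      ext p q
      simp only [Matrix.toBlocks₂₁, Matrix.submatrix_apply, Matrix.of_apply,
        Matrix.zero_apply, hBdef]
      rw [factA (Fin.succ (σ (Sum.inr p))) (by rw [Fin.val_succ, hσr]; omega)]
      apply Tmat_zero
      rw [Fin.val_succ, hσr, Fin.coe_castSucc, hσl]
      have hq := q.isLt
      omega
    rw [h21, Matrix.det_fromBlocks_zero₂₁]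
    have h22 : ((B.submatrix Fin.succ Fin.castSucc).submatrix σ σ).toBlocks₂₂.det = 1 := by
      have htri : (((B.submatrix Fin.succ Fin.castSucc).submatrix σ σ).toBlocks₂₂).BlockTriangular id := by
        intro p q hlt
        simp only [Matrix.toBlocks₂₂, Matrix.submatrix_apply, Matrix.of_apply, hBdef]
        rw [factA (Fin.succ (σ (Sum.inr p))) (by rw [Fin.val_succ, hσr]; omega)]
        apply Tmat_zero
        rw [Fin.val_succ, hσr, Fin.coe_castSucc, hσr]
        have hq : (q : ℕ) < (p : ℕ) := hlt
        omega
      rw [Matrix.det_of_upperTriangular htri]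
      apply Finset.prod_eq_one
      intro p _
      simp only [Matrix.toBlocks₂₂, Matrix.submatrix_apply, Matrix.of_apply, hBdef]
      rw [factA (Fin.succ (σ (Sum.inr p))) (by rw [Fin.val_succ, hσr]; omega)]
      refine Tmat_one ?_ ?_ ?_
      · rw [Fin.val_succ, hσr, Fin.coe_castSucc, hσr]; omega
      · rw [Fin.coe_castSucc, hσr]; omega
      · rw [Fin.val_succ, hσr]; have hp := p.isLt; omega
    rw [h22, mul_one]
    unfold Qmin
    congr 1
    ext p q
    simp only [Matrix.toBlocks₁₁, Matrix.submatrix_apply, Matrix.of_apply, hBdef]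
    have hIv : i (⟨(p : ℕ) + 1, by have := p.isLt; omega⟩ : Fin (m+1))
        = i (Fin.succ (σ (Sum.inl p))) :=
      congrArg i (Fin.ext (by rw [Fin.val_succ, hσl]))
    rw [hIv, Fin.val_succ, Fin.coe_castSucc, hσl, hσl]
    congr 1
    have h2 : 2 ≤ i (Fin.succ (σ (Sum.inl p))) :=
      factB _ (by rw [Fin.val_succ, hσl]; omega)
        (by rw [Fin.val_succ, hσl]; have := p.isLt; omega)
    have h3 := hij (Fin.succ (σ (Sum.inl p)))
    omega
  -- assemble
  show (Matrix.of fun p q : Fin (m+1) =>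
      Tmat n (Phi0 hn z t x) (j + (p : ℕ) + 1 - i p) (j + (q : ℕ))).det = _
  rw [hA, Matrix.det_updateRow_add, Matrix.updateRow_eq_self,
    Matrix.det_updateRow_smul, hCdet, hDdet]
  have hQB : Qmin n x j (m+1) i = B.det := rfl
  have hpow : ((-1:ℝ)) ^ m = (-1) ^ (n - j) := by rw [hm]
  rw [hQB, hpow, div_eq_mul_inv]
  ring
end

section
/- (sl₂ case.) Fix μ ∈ ℝ and a nonzero real z. Define operators on smooth functions of one real variable x by (T_1(τ)ψ)(x) = (1 + xτ)^{μ} ψ(x/(1 + xτ)) (on the domain 1 + xτ > 0) and (T_0(τ)ψ)(x) = ψ(x + τ/z). Let l ≥ 1 and take the alternating word m_s = 1 for s odd, m_s = 0 for s even. Then, on the open domain of (x, t_1, …, t_l) where every prefactor arising in the composition and the quantity P below are positive, T_{m_l}(t_l) ∘ ⋯ ∘ T_{m_1}(t_1) applied to the constant function 1 equals P(x, z; t_1,…,t_l)^{μ}, where P = Σ_{r=0}^{l} z^{−⌊r/2⌋} x^{r mod 2} c_r(t), with c_0 = 1 and c_r(t) = Σ t_{p_1}⋯t_{p_r}, the sum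 over all 1 ≤ p_1 < p_2 < ⋯ < p_r ≤ l with p_s odd for s odd and p_s even for s even. -/
/-!
Each `T_1(τ)` multiplies by a positive prefactor `(1 + xτ)^μ`, so on the positivity domain the
composition applied to `1` is the `μ`-th power of the same composition at `μ = 1`. At `μ = 1` the
claim is a polynomial identity, proved by peeling off the outermost operator: `T_1(t_l)` (for `l`
odd) and `T_0(t_l)` (for `l` even) turn `P` for `t_1, …, t_{l-1}` into `P` for `t_1, …, t_l`,
thanks to the recursion `c_r = c_r' + [r ≡ l mod 2] t_l c_{r-1}'`, where `c'` are the
coefficients for `t_1, …, t_{l-1}`: split the index tuples according to whether `p_r = l`.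
-/

open scoped Classical

/-- Composition `T_{c_1}(s_1) ∘ T_{c_2}(s_2) ∘ ⋯` (head of the list is the outermost
operator) applied to the constant function `1`, for the sl₂ operators
`(T_1(τ)ψ)(x) = (1+xτ)^μ ψ(x/(1+xτ))` and `(T_0(τ)ψ)(x) = ψ(x + τ/z)`. -/
noncomputable def comp2 (μ z : ℝ) : List (ℕ × ℝ) → ℝ → ℝ
  | [], _ => 1
  | (c, s) :: rest, x =>
      if c = 1 then (1 + x * s) ^ μ * comp2 μ z rest (x / (1 + x * s))
      else comp2 μ z rest (x + s / z)

/-- Positivity of every prefactor `1 + xτ` arising in the composition. -/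
def good2 (z : ℝ) : List (ℕ × ℝ) → ℝ → Prop
  | [], _ => True
  | (c, s) :: rest, x =>
      if c = 1 then 0 < 1 + x * s ∧ good2 z rest (x / (1 + x * s))
      else good2 z rest (x + s / z)

/-- `c_r(t) = Σ t_{p_1}⋯t_{p_r}`, summed over `1 ≤ p_1 < ⋯ < p_r ≤ l` with `p_s` odd for
`s` odd and `p_s` even for `s` even (indices written 1-based). -/
noncomputable def ccoef (l r : ℕ) (t : Fin l → ℝ) : ℝ :=
  ∑ p ∈ Finset.univ.filter (fun p : Fin r → Fin l =>
      StrictMono p ∧ ∀ a, ((p a : ℕ) + 1) % 2 = ((a : ℕ) + 1) % 2),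
    ∏ a, t (p a)

/-- `P(x,z;t) = Σ_{r=0}^{l} z^{−⌊r/2⌋} x^{r mod 2} c_r(t)`. -/
noncomputable def Psl2 (l : ℕ) (x z : ℝ) (t : Fin l → ℝ) : ℝ :=
  ∑ r ∈ Finset.range (l + 1), (z ^ (r / 2))⁻¹ * x ^ (r % 2) * ccoef l r t

open Finset

section ConstrainedESymm

variable {R : Type*} [CommSemiring R] (ok : ℕ → ℕ → Prop)

noncomputable def incTuples (l r : ℕ) : Finset (Fin r → Fin l) :=
  univ.filter fun p => StrictMono p ∧ ∀ a : Fin r, ok a (p a)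

noncomputable def constrainedESymm (l r : ℕ) (t : Fin l → R) : R :=
  ∑ p ∈ incTuples ok l r, ∏ a, t (p a)

variable {ok}

@[simp]
lemma mem_incTuples {l r : ℕ} {p : Fin r → Fin l} :
    p ∈ incTuples ok l r ↔ StrictMono p ∧ ∀ a : Fin r, ok a (p a) := by
  simp [incTuples]

lemma constrainedESymm_zero_right (l : ℕ) (t : Fin l → R) : constrainedESymm ok l 0 t = 1 := by
  have : incTuples ok l 0 = univ :=
    filter_true_of_mem fun p _ => ⟨Subsingleton.strictMono p, finZeroElim⟩
  simp [constrainedESymm, this]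

lemma constrainedESymm_of_lt {l r : ℕ} (h : l < r) (t : Fin l → R) :
    constrainedESymm ok l r t = 0 := by
  refine sum_eq_zero fun p hp => absurd h ?_
  simpa using Fintype.card_le_of_injective p (mem_incTuples.1 hp).1.injective

lemma strictMono_castSucc_comp_iff {l r : ℕ} {p : Fin r → Fin l} :
    StrictMono (Fin.castSucc ∘ p) ↔ StrictMono p :=
  ⟨fun h _ _ hab => Fin.castSucc_lt_castSucc_iff.1 (h hab), Fin.strictMono_castSucc.comp⟩

lemma strictMono_snoc_iff {α : Type*} [Preorder α] {n : ℕ} {f : Fin n → α} {x : α} :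
    StrictMono (Fin.snoc f x : Fin (n + 1) → α) ↔ StrictMono f ∧ ∀ i, f i < x := by
  simp [← Fin.insertNth_last', Fin.strictMono_insertNth_iff, Fin.castSucc_lt_last]

lemma exists_castSucc_comp_eq {l r : ℕ} {p : Fin r → Fin (l + 1)}
    (h : ∀ a, p a ≠ Fin.last l) : ∃ p' : Fin r → Fin l, Fin.castSucc ∘ p' = p := by
  choose p' hp' using fun a => Fin.exists_castSucc_eq.2 (h a)
  exact ⟨p', funext hp'⟩

lemma incTuples_filter_last_ne (l q : ℕ) :
    (incTuples ok (l + 1) (q + 1)).filter (fun p => p (Fin.last q) ≠ Fin.last l) =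
      (incTuples ok l (q + 1)).image (Fin.castSucc ∘ ·) := by
  ext p
  simp only [mem_filter, mem_image, mem_incTuples]
  constructor
  · rintro ⟨⟨hmono, hok⟩, hne⟩
    obtain ⟨p', rfl⟩ := exists_castSucc_comp_eq fun a =>
      ((hmono.monotone (Fin.le_last a)).trans_lt (Fin.lt_last_iff_ne_last.2 hne)).ne
    exact ⟨p', ⟨strictMono_castSucc_comp_iff.1 hmono, by simpa using hok⟩, rfl⟩
  · rintro ⟨p', ⟨hmono, hok⟩, rfl⟩
    exact ⟨⟨strictMono_castSucc_comp_iff.2 hmono, by simpa using hok⟩,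
      (Fin.castSucc_lt_last _).ne⟩

lemma incTuples_filter_last_eq {l q : ℕ} (hok : ok q l) :
    (incTuples ok (l + 1) (q + 1)).filter (fun p => p (Fin.last q) = Fin.last l) =
      (incTuples ok l q).image fun p' => Fin.snoc (Fin.castSucc ∘ p') (Fin.last l) := by
  ext p
  simp only [mem_filter, mem_image, mem_incTuples]
  constructor
  · rintro ⟨⟨hmono, hok'⟩, hlast⟩
    obtain ⟨f, rfl⟩ : ∃ f, Fin.snoc f (Fin.last l) = p := ⟨Fin.init p, hlast ▸ Fin.snoc_init_self p⟩
    obtain ⟨hf, hf_lt⟩ := strictMono_snoc_iff.1 hmono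
    obtain ⟨p', rfl⟩ := exists_castSucc_comp_eq fun a => (hf_lt a).ne
    exact ⟨p', ⟨strictMono_castSucc_comp_iff.1 hf, fun a => by simpa using hok' a.castSucc⟩, rfl⟩
  · rintro ⟨p', ⟨hmono, hok'⟩, rfl⟩
    refine ⟨⟨strictMono_snoc_iff.2 ⟨strictMono_castSucc_comp_iff.2 hmono,
      fun a => Fin.castSucc_lt_last _⟩, fun a => ?_⟩, by simp⟩
    cases a using Fin.lastCases <;> simp [hok, hok']

lemma incTuples_filter_last_eq_empty {l q : ℕ} (hok : ¬ ok q l) :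
    (incTuples ok (l + 1) (q + 1)).filter (fun p => p (Fin.last q) = Fin.last l) = ∅ := by
  refine filter_false_of_mem fun p hp hlast => hok ?_
  simpa [hlast] using (mem_incTuples.1 hp).2 (Fin.last q)

lemma constrainedESymm_succ_succ (l q : ℕ) [Decidable (ok q l)] (t : Fin (l + 1) → R) :
    constrainedESymm ok (l + 1) (q + 1) t =
      constrainedESymm ok l (q + 1) (Fin.init t) +
        if ok q l then t (Fin.last l) * constrainedESymm ok l q (Fin.init t) else 0 := by
  rw [constrainedESymm,
    ← sum_filter_not_add_sum_filter _ (fun p => p (Fin.last q) = Fin.last l),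
    incTuples_filter_last_ne, sum_image (Fin.castSucc_injective l).comp_left.injOn]
  congr 1
  split_ifs with hok
  · rw [incTuples_filter_last_eq hok, sum_image, constrainedESymm, mul_sum]
    · refine sum_congr rfl fun p' _ => ?_
      simp [Fin.prod_univ_castSucc, Fin.init, mul_comm]
    · intro p₁ _ p₂ _ h
      funext a
      simpa using congrFun h a.castSucc
  · rw [incTuples_filter_last_eq_empty hok, sum_empty]

end ConstrainedESymm

lemma ccoef_eq_constrainedESymm (l r : ℕ) (t : Fin l → ℝ) :
    ccoef l r t = constrainedESymm (fun a b => (b + 1) % 2 = (a + 1) % 2) l r t := by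
  unfold ccoef constrainedESymm incTuples
  congr

lemma ccoef_succ_succ (l q : ℕ) (t : Fin (l + 1) → ℝ) :
    ccoef (l + 1) (q + 1) t =
      ccoef l (q + 1) (Fin.init t) +
        if (l + 1) % 2 = (q + 1) % 2 then t (Fin.last l) * ccoef l q (Fin.init t) else 0 := by
  simp only [ccoef_eq_constrainedESymm, constrainedESymm_succ_succ]

lemma ccoef_zero_right (l : ℕ) (t : Fin l → ℝ) : ccoef l 0 t = 1 := by
  rw [ccoef_eq_constrainedESymm, constrainedESymm_zero_right]

lemma ccoef_of_lt {l r : ℕ} (h : l < r) (t : Fin l → ℝ) : ccoef l r t = 0 := by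
  rw [ccoef_eq_constrainedESymm, constrainedESymm_of_lt h]

lemma Psl2_zero (x z : ℝ) (t : Fin 0 → ℝ) : Psl2 0 x z t = 1 := by
  simp [Psl2, ccoef_zero_right]

lemma Psl2_succ (k : ℕ) (x z : ℝ) (t : Fin (k + 1) → ℝ) :
    Psl2 (k + 1) x z t =
      Psl2 k x z (Fin.init t) + ∑ r ∈ range (k + 1),
        if (k + 1) % 2 = (r + 1) % 2 then
          (z ^ ((r + 1) / 2))⁻¹ * x ^ ((r + 1) % 2) * (t (Fin.last k) * ccoef k r (Fin.init t))
        else 0 := by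
  have hk : Psl2 k x z (Fin.init t) =
      ∑ r ∈ range (k + 2), (z ^ (r / 2))⁻¹ * x ^ (r % 2) * ccoef k r (Fin.init t) := by
    rw [sum_range_succ, ccoef_of_lt k.lt_succ_self, mul_zero, add_zero, Psl2]
  rw [hk, Psl2, sum_range_succ', sum_range_succ' _ (k + 1)]
  simp only [ccoef_succ_succ, ccoef_zero_right, mul_add, mul_ite, mul_zero, sum_add_distrib]
  ring

lemma Psl2_succ_of_odd {k : ℕ} (hk : (k + 1) % 2 = 1) {x : ℝ} (z : ℝ) {t : Fin (k + 1) → ℝ}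
    (h : 1 + x * t (Fin.last k) ≠ 0) :
    Psl2 (k + 1) x z t =
      (1 + x * t (Fin.last k)) * Psl2 k (x / (1 + x * t (Fin.last k))) z (Fin.init t) := by
  rw [Psl2_succ, Psl2, Psl2, mul_sum, ← sum_add_distrib]
  refine sum_congr rfl fun r _ => ?_
  rcases Nat.mod_two_eq_zero_or_one r with hr | hr
  · rw [if_pos (by omega), show (r + 1) / 2 = r / 2 by omega, show (r + 1) % 2 = 1 by omega, hr]
    ring
  · rw [if_neg (by omega), hr, add_zero]
    field_simp

lemma Psl2_succ_of_even {k : ℕ} (hk : (k + 1) % 2 = 0) (x : ℝ) {z : ℝ} (hz : z ≠ 0)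
    (t : Fin (k + 1) → ℝ) :
    Psl2 (k + 1) x z t = Psl2 k (x + t (Fin.last k) / z) z (Fin.init t) := by
  rw [Psl2_succ, Psl2, Psl2, ← sum_add_distrib]
  refine sum_congr rfl fun r _ => ?_
  rcases Nat.mod_two_eq_zero_or_one r with hr | hr
  · rw [if_neg (by omega), hr]
    simp
  · rw [if_pos (by omega), show (r + 1) / 2 = r / 2 + 1 by omega, show (r + 1) % 2 = 0 by omega,
      hr, pow_succ]
    field_simp
    ring

lemma comp2_one_pos (z : ℝ) : ∀ (w : List (ℕ × ℝ)) (x : ℝ), good2 z w x → 0 < comp2 1 z w x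
  | [], _, _ => by simp [comp2]
  | (c, s) :: w, x, h => by
    by_cases hc : c = 1
    · simp only [good2, comp2, if_pos hc, Real.rpow_one] at h ⊢
      exact mul_pos h.1 (comp2_one_pos z w _ h.2)
    · simp only [good2, comp2, if_neg hc] at h ⊢
      exact comp2_one_pos z w _ h

lemma comp2_eq_rpow (μ z : ℝ) :
    ∀ (w : List (ℕ × ℝ)) (x : ℝ), good2 z w x → comp2 μ z w x = comp2 1 z w x ^ μ
  | [], _, _ => by simp [comp2]
  | (c, s) :: w, x, h => by
    by_cases hc : c = 1
    · simp only [good2, comp2, if_pos hc, Real.rpow_one] at h ⊢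
      rw [comp2_eq_rpow μ z w _ h.2, Real.mul_rpow h.1.le (comp2_one_pos z w _ h.2).le]
    · simp only [good2, comp2, if_neg hc] at h ⊢
      exact comp2_eq_rpow μ z w _ h

lemma List.reverse_ofFn_succ {α : Type*} {n : ℕ} (f : Fin (n + 1) → α) :
    (List.ofFn f).reverse = f (Fin.last n) :: (List.ofFn (Fin.init f)).reverse := by
  rw [List.ofFn_succ', List.concat_eq_append, List.reverse_append]
  rfl

lemma comp2_one_alternating {z : ℝ} (hz : z ≠ 0) : ∀ (l : ℕ) (m : Fin l → ℕ),
    (∀ a : Fin l, m a = if ((a : ℕ) + 1) % 2 = 1 then 1 else 0) →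
    ∀ (t : Fin l → ℝ) (x : ℝ), good2 z ((List.ofFn fun a => (m a, t a)).reverse) x →
      comp2 1 z ((List.ofFn fun a => (m a, t a)).reverse) x = Psl2 l x z t
  | 0, _, _, _, _, _ => by simp [comp2, Psl2_zero]
  | k + 1, m, hm, t, x, h => by
    rw [List.reverse_ofFn_succ] at h ⊢
    have ih : ∀ x, good2 z (List.ofFn (Fin.init fun a => (m a, t a))).reverse x →
        comp2 1 z (List.ofFn (Fin.init fun a => (m a, t a))).reverse x = Psl2 k x z (Fin.init t) :=
      comp2_one_alternating hz k (Fin.init m) (fun a => by simpa [Fin.init] using hm a.castSucc)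
        (Fin.init t)
    rcases Nat.mod_two_eq_zero_or_one (k + 1) with hk | hk
    · have hm_last : m (Fin.last k) = 0 := by simp [hm, hk]
      simp only [comp2, good2, hm_last, if_neg zero_ne_one] at h ⊢
      rw [Psl2_succ_of_even hk x hz]
      exact ih _ h
    · have hm_last : m (Fin.last k) = 1 := by simp [hm, hk]
      simp only [comp2, good2, hm_last, if_pos, Real.rpow_one] at h ⊢
      rw [Psl2_succ_of_odd hk z h.1.ne', ih _ h.2]

theorem stmt11_general (μ z : ℝ) (hz : z ≠ 0) (l : ℕ)
    (m : Fin l → ℕ)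
    (hm : ∀ a : Fin l, m a = if ((a : ℕ) + 1) % 2 = 1 then 1 else 0)
    (t : Fin l → ℝ) (x : ℝ)
    (hgood : good2 z ((List.ofFn fun a : Fin l => (m a, t a)).reverse) x) :
    comp2 μ z ((List.ofFn fun a : Fin l => (m a, t a)).reverse) x =
      Psl2 l x z t ^ μ := by
  rw [comp2_eq_rpow μ z _ x hgood, comp2_one_alternating hz l m hm t x hgood]

/-- sl₂ kernel formula: for the alternating word `m = (1,0,1,0,…)` of length `l`, on the
domain where all prefactors and `P` are positive,
`T_{m_l}(t_l) ∘ ⋯ ∘ T_{m_1}(t_1) 1 = P(x,z;t_1,…,t_l)^μ`. -/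
theorem stmt11 (μ z : ℝ) (hz : z ≠ 0) (l : ℕ) (hl : 1 ≤ l)
    (m : Fin l → ℕ)
    (hm : ∀ a : Fin l, m a = if ((a : ℕ) + 1) % 2 = 1 then 1 else 0)
    (t : Fin l → ℝ) (x : ℝ)
    (hgood : good2 z ((List.ofFn fun a : Fin l => (m a, t a)).reverse) x)
    (hP : 0 < Psl2 l x z t) :
    comp2 μ z ((List.ofFn fun a : Fin l => (m a, t a)).reverse) x =
      Psl2 l x z t ^ μ :=
  stmt11_general μ z hz l m hm t x hgood
end
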